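/- arXiv:1002.3931 — 5 statements merged into one kernel-verified Lean document; each statement's English description precedes it below -/
import Mathlib

section
/- For all x > 0 and y > 0, (1/2)·log₂(1 + x/2) + (1/2)·log₂(1 + (x/2)/(1+y)) > log₂(1 + (x/2)/(1 + y/2)). -/
/-!
Writing `A = 1 + x/2`, `B = 1 + (x/2)/(1+y)` and `C = 1 + (x/2)/(1+y/2)`, the claim is
`log C < (log A + log B)/2`, i.e. `C² < A B`: the geometric mean of the two frequency-division
rates beats the shared-spectrum rate. This is the identity
`A B - C² = x y² (x + 4 + 2y) / (16 (1+y) (1+y/2)²)`.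
-/

open Real

lemma Real.logb_lt_half_add_half_of_sq_lt_mul {b p q r : ℝ} (hb : 1 < b) (hr : 0 < r)
    (hp : 0 < p) (hq : 0 < q) (h : r ^ 2 < p * q) :
    logb b r < (1/2) * logb b p + (1/2) * logb b q := by
  have hlog : logb b (r ^ 2) < logb b (p * q) := logb_lt_logb hb (by positivity) h
  rw [logb_pow, logb_mul hp.ne' hq.ne'] at hlog
  push_cast at hlog
  linarith

lemma mul_sub_sq_eq_of_rates (x y : ℝ) (hy : 0 < y) :
    (1 + x/2) * (1 + (x/2)/(1+y)) - (1 + (x/2)/(1 + y/2)) ^ 2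
      = x * y ^ 2 * (x + 4 + 2*y) / (16 * (1+y) * (1 + y/2) ^ 2) := by
  have : 1 + y ≠ 0 := by positivity
  have : 1 + y/2 ≠ 0 := by positivity
  field_simp
  ring

lemma sq_lt_mul_of_rates {x y : ℝ} (hx : 0 < x) (hy : 0 < y) :
    (1 + (x/2)/(1 + y/2)) ^ 2 < (1 + x/2) * (1 + (x/2)/(1+y)) := by
  rw [← sub_pos, mul_sub_sq_eq_of_rates x y hy]
  positivity

theorem fs_fdm_gt_fs_fs (x y : ℝ) (hx : 0 < x) (hy : 0 < y) :
    (1/2) * Real.logb 2 (1 + x/2) + (1/2) * Real.logb 2 (1 + (x/2)/(1+y))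
      > Real.logb 2 (1 + (x/2)/(1 + y/2)) :=
  Real.logb_lt_half_add_half_of_sq_lt_mul one_lt_two (by positivity) (by positivity)
    (by positivity) (sq_lt_mul_of_rates hx hy)
end

section
/- For x > 0 and y > 0, the inequality (1/2)·log₂(1 + x) ≥ (1/2)·log₂(1 + x/2) + (1/2)·log₂(1 + (x/2)/(1+y)) holds if and only if y ≥ x/2. -/
/-! The two logarithms combine to `logb 2 ((1 + x/2) (1 + (x/2)/(1+y)))`, so the comparison is
between `(1 + x/2) (1 + (x/2)/(1+y))` and `1 + x`, whose difference is
`x (2y - x) / (4 (1 + y))`: its sign is that of `2y - x`. -/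

lemma Real.logb_add_logb_le_logb_iff {b u v w : ℝ} (hb : 1 < b) (hu : 0 < u) (hv : 0 < v)
    (hw : 0 < w) : Real.logb b u + Real.logb b v ≤ Real.logb b w ↔ u * v ≤ w := by
  rw [← Real.logb_mul hu.ne' hv.ne', Real.logb_le_logb hb (mul_pos hu hv) hw]

lemma one_add_sub_one_add_half_mul_one_add_half_div {x y : ℝ} (hy : 1 + y ≠ 0) :
    1 + x - (1 + x / 2) * (1 + x / 2 / (1 + y)) = x * (2 * y - x) / (4 * (1 + y)) := by
  field_simp
  ring

lemma one_add_half_mul_one_add_half_div_le_iff {x y : ℝ} (hx : 0 < x) (hy : 0 < 1 + y) :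
    (1 + x / 2) * (1 + x / 2 / (1 + y)) ≤ 1 + x ↔ x / 2 ≤ y := by
  rw [← sub_nonneg, one_add_sub_one_add_half_mul_one_add_half_div hy.ne',
    le_div_iff₀ (by positivity), zero_mul, mul_nonneg_iff_of_pos_left hx]
  constructor <;> intro h <;> linarith

theorem fdm_ge_fs_iff (x y : ℝ) (hx : 0 < x) (hy : 0 < y) :
    (1/2) * Real.logb 2 (1 + x) ≥
        (1/2) * Real.logb 2 (1 + x/2) + (1/2) * Real.logb 2 (1 + (x/2)/(1+y))
      ↔ y ≥ x/2 := by
  have h1y : 0 < 1 + y := by linarith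
  rw [ge_iff_le, ← mul_add, mul_le_mul_iff_right₀ one_half_pos,
    Real.logb_add_logb_le_logb_iff one_lt_two (by positivity) (by positivity) (by positivity),
    one_add_half_mul_one_add_half_div_le_iff hx h1y, ge_iff_le]
end

section
/- If y ≤ x/2 and x > 0, y > 0, then for every a ∈ [0,1], a·u_FS,FDM(x,y) + (1−a)·u_FS,FS(x,y) ≥ a·u_FDM,FDM(x,y) + (1−a)·u_FDM,FS(x,y), where u_FDM,FDM(x,y) = (1/2)log₂(1+x), u_FDM,FS(x,y) = (1/2)log₂(1 + x/(1+y/2)), u_FS,FDM(x,y) = (1/2)log₂(1+x/2) + (1/2)log₂(1 + (x/2)/(1+y)), u_FS,FS(x,y) = log₂(1 + (x/2)/(1+y/2)). -/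
noncomputable def uFDMFDM (x _y : ℝ) : ℝ := (1/2) * Real.logb 2 (1 + x)
noncomputable def uFDMFS (x y : ℝ) : ℝ := (1/2) * Real.logb 2 (1 + x/(1 + y/2))
noncomputable def uFSFDM (x y : ℝ) : ℝ :=
  (1/2) * Real.logb 2 (1 + x/2) + (1/2) * Real.logb 2 (1 + (x/2)/(1+y))
noncomputable def uFSFS (x y : ℝ) : ℝ := Real.logb 2 (1 + (x/2)/(1 + y/2))

/-!
Against FDM, splitting the band multiplies the two rates: `log (1 + x)` is beaten by
`log ((1 + x/2) (1 + (x/2)/(1+y)))`, and the product exceeds `1 + x` by `x (x/2 - y) / (2 (1 + y))`,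
which is where `y ≤ x/2` enters. Against FS, with `t = x/(1 + y/2)`, the comparison is
`1 + t ≤ (1 + t/2)^2`, true for every `t`. Expected payoffs are convex combinations of these.
-/

open Real

theorem one_add_le_mul_one_add_div {x y : ℝ} (hy : 0 ≤ y) (hyx : y ≤ x / 2) :
    1 + x ≤ (1 + x / 2) * (1 + x / 2 / (1 + y)) := by
  have hx : 0 ≤ x := by linarith
  have hy1 : 0 < 1 + y := by linarith
  have gap : (1 + x / 2) * (1 + x / 2 / (1 + y)) - (1 + x) = x * (x / 2 - y) / (2 * (1 + y)) := by
    field_simp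
    ring
  rw [← sub_nonneg, gap]
  exact div_nonneg (mul_nonneg hx (sub_nonneg.2 hyx)) (by positivity)

theorem logb_one_add_le_two_mul_logb_one_add_half {t : ℝ} (ht : -1 < t) :
    logb 2 (1 + t) ≤ 2 * logb 2 (1 + t / 2) := by
  rw [← logb_rpow_eq_mul_logb_of_pos (by linarith), rpow_two]
  exact logb_le_logb_of_le one_lt_two (by linarith) (by nlinarith [sq_nonneg (t / 2)])

theorem uFDMFDM_le_uFSFDM {x y : ℝ} (hy : 0 ≤ y) (hyx : y ≤ x / 2) :
    uFDMFDM x y ≤ uFSFDM x y := by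
  have hx : 0 ≤ x := by linarith
  unfold uFDMFDM uFSFDM
  rw [← mul_add, ← logb_mul (by positivity) (by positivity)]
  gcongr
  · linarith
  · exact one_add_le_mul_one_add_div hy hyx

theorem uFDMFS_le_uFSFS {x y : ℝ} (hx : 0 ≤ x) (hy : 0 ≤ y) : uFDMFS x y ≤ uFSFS x y := by
  unfold uFDMFS uFSFS
  rw [div_right_comm]
  have ht : 0 ≤ x / (1 + y / 2) := by positivity
  have := logb_one_add_le_two_mul_logb_one_add_half (by linarith : -1 < x / (1 + y / 2))
  linarith

theorem fs_dominant (x y : ℝ) (hx : 0 < x) (hy : 0 < y) (hyx : y ≤ x/2)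
    (a : ℝ) (ha0 : 0 ≤ a) (ha1 : a ≤ 1) :
    a * uFSFDM x y + (1 - a) * uFSFS x y ≥ a * uFDMFDM x y + (1 - a) * uFDMFS x y :=
  add_le_add (mul_le_mul_of_nonneg_left (uFDMFDM_le_uFSFDM hy.le hyx) ha0)
    (mul_le_mul_of_nonneg_left (uFDMFS_le_uFSFS hx.le hy.le) (sub_nonneg.2 ha1))
end

section
/- The pure full-spread strategy profile is a Nash equilibrium: for all x > 0, y > 0, u_FS,FS(x,y) ≥ u_FDM,FS(x,y), i.e., log₂(1 + (x/2)/(1 + y/2)) ≥ (1/2)·log₂(1 + x/(1 + y/2)). -/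
open Real

theorem half_mul_logb_one_add_le_logb_one_add_half {b t : ℝ} (hb : 1 < b) (ht : -1 < t) :
    1 / 2 * logb b (1 + t) ≤ logb b (1 + t / 2) := by
  have hsq : 1 + t ≤ (1 + t / 2) ^ 2 := by nlinarith [sq_nonneg t]
  have hlog : logb b (1 + t) ≤ 2 * logb b (1 + t / 2) := by
    calc logb b (1 + t) ≤ logb b ((1 + t / 2) ^ 2) := logb_le_logb_of_le hb (by linarith) hsq
      _ = 2 * logb b (1 + t / 2) := by rw [logb_pow]; norm_num
  linarith

theorem pure_fs_is_ne (x y : ℝ) (hx : 0 < x) (hy : 0 < y) :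
    Real.logb 2 (1 + (x/2)/(1 + y/2)) ≥ (1/2) * Real.logb 2 (1 + x/(1 + y/2)) := by
  have hsinr : 0 < x / (1 + y / 2) := by positivity
  rw [div_right_comm]
  exact half_mul_logb_one_add_le_logb_one_add_half one_lt_two (by linarith)
end

section
/- Let f_Z(z) = ρ^{m₁} m₁^{m₁} m₂^{m₂} Γ(m₁+m₂)/(Γ(m₁)Γ(m₂)) · z^{m₂−1}/(m₂ z + ρ m₁)^{m₁+m₂} with ρ, m₁, m₂ > 0. Then lim_{b→∞} f_Z(b)·b²·log(b) = ∞ if and only if m₁ ≤ 1. -/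
noncomputable def ratioPDF (m₁ m₂ ρ z : ℝ) : ℝ :=
  ρ ^ m₁ * m₁ ^ m₁ * m₂ ^ m₂ * Real.Gamma (m₁ + m₂) / (Real.Gamma m₁ * Real.Gamma m₂)
    * z ^ (m₂ - 1) / (m₂ * z + ρ * m₁) ^ (m₁ + m₂)

/-!
Writing `f_Z(b) b² log b = K · (b / (m₂ b + ρ m₁))^(m₁+m₂) · b^(1-m₁) log b` with `K > 0`,
the middle factor tends to the positive constant `m₂^-(m₁+m₂)`, so the product tends to `∞`
exactly when `b^(1-m₁) log b` does. That happens iff `1 - m₁ ≥ 0`: for a negative exponent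
the power beats the logarithm and the product tends to `0`.
-/

open Filter Topology Real

section TendstoMulAtTop

variable {𝕜 α : Type*} [Field 𝕜] [LinearOrder 𝕜] [IsStrictOrderedRing 𝕜]
  [TopologicalSpace 𝕜] [OrderTopology 𝕜] {l : Filter α} {f g : α → 𝕜}

theorem Filter.Tendsto.pos_mul_atTop_iff {C : 𝕜} (hC : 0 < C) (hf : Tendsto f l (𝓝 C)) :
    Tendsto (fun x => f x * g x) l atTop ↔ Tendsto g l atTop := by
  refine ⟨fun hfg => ?_, hf.pos_mul_atTop hC⟩
  have hg : (fun x => (f x)⁻¹ * (f x * g x)) =ᶠ[l] g := by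
    filter_upwards [hf.eventually_ne hC.ne'] with x hx
    rw [inv_mul_cancel_left₀ hx]
  exact (tendsto_congr' hg).1 ((hf.inv₀ hC.ne').pos_mul_atTop (inv_pos.2 hC) hfg)

end TendstoMulAtTop

theorem tendsto_div_mul_add_const_atTop {a : ℝ} (ha : a ≠ 0) (c : ℝ) :
    Tendsto (fun x => x / (a * x + c)) atTop (𝓝 a⁻¹) := by
  have hden : Tendsto (fun x => a + c / x) atTop (𝓝 a) := by
    simpa using (tendsto_const_nhds (x := a)).add (tendsto_const_nhds.div_atTop tendsto_id)
  refine (hden.inv₀ ha).congr' ?_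
  filter_upwards [eventually_gt_atTop 0] with x hx
  field_simp

theorem tendsto_rpow_mul_log_atTop_nhds_zero {s : ℝ} (hs : s < 0) :
    Tendsto (fun x => x ^ s * log x) atTop (𝓝 0) := by
  refine (isLittleO_log_rpow_atTop (neg_pos.2 hs)).tendsto_div_nhds_zero.congr' ?_
  filter_upwards [eventually_gt_atTop 0] with x hx
  rw [rpow_neg hx.le, div_inv_eq_mul, mul_comm]

theorem tendsto_rpow_mul_log_atTop_atTop_iff (s : ℝ) :
    Tendsto (fun x => x ^ s * log x) atTop atTop ↔ 0 ≤ s := by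
  refine ⟨fun h => ?_, fun hs => ?_⟩
  · by_contra! hs
    exact not_tendsto_nhds_of_tendsto_atTop h 0 (tendsto_rpow_mul_log_atTop_nhds_zero hs)
  · rcases hs.lt_or_eq with hs | rfl
    · exact (tendsto_rpow_atTop hs).atTop_mul_atTop₀ tendsto_log_atTop
    · simpa using tendsto_log_atTop

noncomputable def ratioPDFCoeff (m₁ m₂ ρ : ℝ) : ℝ :=
  ρ ^ m₁ * m₁ ^ m₁ * m₂ ^ m₂ * Gamma (m₁ + m₂) / (Gamma m₁ * Gamma m₂)

theorem ratioPDFCoeff_pos {m₁ m₂ ρ : ℝ} (hm₁ : 0 < m₁) (hm₂ : 0 < m₂) (hρ : 0 < ρ) :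
    0 < ratioPDFCoeff m₁ m₂ ρ := by
  unfold ratioPDFCoeff
  positivity

theorem ratioPDF_mul_sq_mul_log {m₁ m₂ ρ b : ℝ} (hm₁ : 0 ≤ m₁) (hm₂ : 0 < m₂) (hρ : 0 ≤ ρ)
    (hb : 0 < b) :
    ratioPDF m₁ m₂ ρ b * b ^ 2 * log b =
      ratioPDFCoeff m₁ m₂ ρ * (b / (m₂ * b + ρ * m₁)) ^ (m₁ + m₂) * (b ^ (1 - m₁) * log b) := by
  have hD : 0 < m₂ * b + ρ * m₁ := by positivity
  rw [ratioPDF, ratioPDFCoeff, div_rpow hb.le hD.le, rpow_add hb, rpow_sub hb, rpow_sub hb,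
    rpow_one]
  field_simp

theorem tail_condition_iff (m₁ m₂ ρ : ℝ) (hm₁ : 0 < m₁) (hm₂ : 0 < m₂) (hρ : 0 < ρ) :
    Filter.Tendsto (fun b => ratioPDF m₁ m₂ ρ b * b ^ 2 * Real.log b)
        Filter.atTop Filter.atTop ↔ m₁ ≤ 1 := by
  have hfactor : (fun b => ratioPDF m₁ m₂ ρ b * b ^ 2 * log b) =ᶠ[atTop] fun b =>
      ratioPDFCoeff m₁ m₂ ρ * (b / (m₂ * b + ρ * m₁)) ^ (m₁ + m₂) * (b ^ (1 - m₁) * log b) := by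
    filter_upwards [eventually_gt_atTop 0] with b hb
    exact ratioPDF_mul_sq_mul_log hm₁.le hm₂ hρ.le hb
  have hlim : Tendsto (fun b => ratioPDFCoeff m₁ m₂ ρ * (b / (m₂ * b + ρ * m₁)) ^ (m₁ + m₂))
      atTop (𝓝 (ratioPDFCoeff m₁ m₂ ρ * m₂⁻¹ ^ (m₁ + m₂))) :=
    tendsto_const_nhds.mul <|
      (tendsto_div_mul_add_const_atTop hm₂.ne' _).rpow_const (Or.inl (inv_ne_zero hm₂.ne'))
  have hpos : 0 < ratioPDFCoeff m₁ m₂ ρ * m₂⁻¹ ^ (m₁ + m₂) := by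
    have := ratioPDFCoeff_pos hm₁ hm₂ hρ
    positivity
  rw [tendsto_congr' hfactor, hlim.pos_mul_atTop_iff hpos, tendsto_rpow_mul_log_atTop_atTop_iff,
    sub_nonneg]
end
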